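/- arXiv:2410.19220 — 3 statements merged into one kernel-verified Lean document; each statement's English description precedes it below -/
import Mathlib

section
/- Let q be a prime, n ≥ 1, and let R_q := (ZMod q)[X] ⧸ (X^n + 1). Let l, m be positive integers, A an l × (2l + l·m) matrix, T a 2l × (l·m) matrix, L an invertible l × l matrix, and G an l × (l·m) matrix over R_q, such that A · [T ; I_{l·m}] = L·G. Let w ∈ R_q^l, p ∈ R_q^{2l + l·m}, and d ∈ R_q^{l·m} satisfy G·d = L⁻¹·(w − A·p). Then the vector u := p + [T ; I_{l·m}]·d satisfies A·u = w. (Correctness of the Gaussian preimage sampler MLSamplePre.) -/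
open Matrix Polynomial

/-- `R_q := (ZMod q)[X] ⧸ (X^n + 1)`. -/
abbrev Rq (q n : ℕ) : Type :=
  Polynomial (ZMod q) ⧸ Ideal.span {(Polynomial.X : Polynomial (ZMod q)) ^ n + 1}

theorem Matrix.mul_mulVec_eq_of_mulVec_eq_nonsing_inv_mulVec {ι κ R : Type*}
    [Fintype ι] [DecidableEq ι] [Fintype κ] [CommRing R]
    {L : Matrix ι ι R} (hL : IsUnit L) {G : Matrix ι κ R} {d : κ → R} {v : ι → R}
    (hd : G *ᵥ d = L⁻¹ *ᵥ v) :
    (L * G) *ᵥ d = v := by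
  rw [← mulVec_mulVec, hd, mulVec_mulVec, mul_nonsing_inv L ((isUnit_iff_isUnit_det L).mp hL),
    one_mulVec]

theorem mlsamplepre_correct_general (q n : ℕ)
    (l m : ℕ)
    (A : Matrix (Fin l) (Fin (2 * l) ⊕ Fin (l * m)) (Rq q n))
    (T : Matrix (Fin (2 * l)) (Fin (l * m)) (Rq q n))
    (L : Matrix (Fin l) (Fin l) (Rq q n)) (hL : IsUnit L)
    (G : Matrix (Fin l) (Fin (l * m)) (Rq q n))
    (hA : A * Matrix.fromRows T (1 : Matrix (Fin (l * m)) (Fin (l * m)) (Rq q n)) = L * G)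
    (w : Fin l → Rq q n)
    (p : Fin (2 * l) ⊕ Fin (l * m) → Rq q n)
    (d : Fin (l * m) → Rq q n)
    (hd : G *ᵥ d = L⁻¹ *ᵥ (w - A *ᵥ p)) :
    A *ᵥ (p + Matrix.fromRows T (1 : Matrix (Fin (l * m)) (Fin (l * m)) (Rq q n)) *ᵥ d) = w := by
  rw [mulVec_add, mulVec_mulVec, hA, mul_mulVec_eq_of_mulVec_eq_nonsing_inv_mulVec hL hd,
    add_sub_cancel]

/-- Correctness of the Gaussian preimage sampler `MLSamplePre`:
if `A · [T ; I] = L·G` with `L` invertible, and `G·d = L⁻¹·(w − A·p)`,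
then `u := p + [T ; I]·d` satisfies `A·u = w`. -/
theorem mlsamplepre_correct (q n : ℕ) (hq : q.Prime) (hn : 1 ≤ n)
    (l m : ℕ) (hl : 0 < l) (hm : 0 < m)
    (A : Matrix (Fin l) (Fin (2 * l) ⊕ Fin (l * m)) (Rq q n))
    (T : Matrix (Fin (2 * l)) (Fin (l * m)) (Rq q n))
    (L : Matrix (Fin l) (Fin l) (Rq q n)) (hL : IsUnit L)
    (G : Matrix (Fin l) (Fin (l * m)) (Rq q n))
    (hA : A * Matrix.fromRows T (1 : Matrix (Fin (l * m)) (Fin (l * m)) (Rq q n)) = L * G)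
    (w : Fin l → Rq q n)
    (p : Fin (2 * l) ⊕ Fin (l * m) → Rq q n)
    (d : Fin (l * m) → Rq q n)
    (hd : G *ᵥ d = L⁻¹ *ᵥ (w - A *ᵥ p)) :
    A *ᵥ (p + Matrix.fromRows T (1 : Matrix (Fin (l * m)) (Fin (l * m)) (Rq q n)) *ᵥ d) = w :=
  mlsamplepre_correct_general q n l m A T L hL G hA w p d hd
end

section
/- Let q be a prime, n ≥ 1, and let R_q := (ZMod q)[X] ⧸ (X^n + 1). Let l, m be positive integers, B' an l × 2l matrix, T a 2l × (l·m) matrix, and G an l × (l·m) matrix over R_q, and set A := [B' | G − B'·T]. Let σ₁ ∈ R_q^l, and suppose p ∈ R_q^{2l + l·m} and d ∈ R_q^{l·m} satisfy G·d = σ₁ − A·p. Then σ₂ := p + [T ; I_{l·m}]·d satisfies A·σ₂ = σ₁. (Correctness of signing: an honestly generated signature component σ₂ passes the verification check A·σ₂ = σ₁ mod q, where A is produced by MLTrapGen with L = I.) -/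
open Matrix Polynomial

/-! `[T ; I]` is a `G`-trapdoor for `A = [B' | G − B'·T]`, since `A·[T ; I] = B'·T + (G − B'·T) = G`;
hence `A·(p + [T ; I]·d) = A·p + G·d = σ₁`. -/

namespace Matrix

variable {R k a b : Type*} [Ring R] [Fintype a] [Fintype b]

-- Without the ascription on `1`, the outer `*` elaborates to the `CStarMatrix` product.
theorem fromCols_sub_mul_mul_fromRows_one [DecidableEq b] (B : Matrix k a R) (T : Matrix a b R)
    (G : Matrix k b R) : fromCols B (G - B * T) * fromRows T (1 : Matrix b b R) = G := by
  rw [Matrix.fromCols_mul_fromRows, Matrix.mul_one, add_sub_cancel]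

theorem mulVec_add_mulVec_of_mul_eq (A : Matrix k a R)
    (S : Matrix a b R) (G : Matrix k b R) (hAS : A * S = G) {σ : k → R} {p : a → R}
    {d : b → R} (hd : G *ᵥ d = σ - A *ᵥ p) : A *ᵥ (p + S *ᵥ d) = σ := by
  rw [mulVec_add, mulVec_mulVec, hAS, hd, add_sub_cancel]

end Matrix

theorem mlsign_verifies_general (q n : ℕ)
    (l m : ℕ)
    (B' : Matrix (Fin l) (Fin (2 * l)) (Rq q n))
    (T : Matrix (Fin (2 * l)) (Fin (l * m)) (Rq q n))
    (G : Matrix (Fin l) (Fin (l * m)) (Rq q n))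
    (A : Matrix (Fin l) (Fin (2 * l) ⊕ Fin (l * m)) (Rq q n))
    (hA : A = Matrix.fromCols B' (G - B' * T))
    (σ₁ : Fin l → Rq q n)
    (p : Fin (2 * l) ⊕ Fin (l * m) → Rq q n)
    (d : Fin (l * m) → Rq q n)
    (hd : G *ᵥ d = σ₁ - A *ᵥ p)
    (σ₂ : Fin (2 * l) ⊕ Fin (l * m) → Rq q n)
    (hσ₂ : σ₂ = p + Matrix.fromRows T (1 : Matrix (Fin (l * m)) (Fin (l * m)) (Rq q n)) *ᵥ d) :
    A *ᵥ σ₂ = σ₁ := by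
  subst hA hσ₂
  exact mulVec_add_mulVec_of_mul_eq _ _ G (fromCols_sub_mul_mul_fromRows_one B' T G) hd

/-- Correctness of signing: with `A := [B' | G − B'·T]` (output of `MLTrapGen` with `L = I`),
if `G·d = σ₁ − A·p` then `σ₂ := p + [T ; I]·d` passes the verification check `A·σ₂ = σ₁`. -/
theorem mlsign_verifies (q n : ℕ) (hq : q.Prime) (hn : 1 ≤ n)
    (l m : ℕ) (hl : 0 < l) (hm : 0 < m)
    (B' : Matrix (Fin l) (Fin (2 * l)) (Rq q n))
    (T : Matrix (Fin (2 * l)) (Fin (l * m)) (Rq q n))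
    (G : Matrix (Fin l) (Fin (l * m)) (Rq q n))
    (A : Matrix (Fin l) (Fin (2 * l) ⊕ Fin (l * m)) (Rq q n))
    (hA : A = Matrix.fromCols B' (G - B' * T))
    (σ₁ : Fin l → Rq q n)
    (p : Fin (2 * l) ⊕ Fin (l * m) → Rq q n)
    (d : Fin (l * m) → Rq q n)
    (hd : G *ᵥ d = σ₁ - A *ᵥ p)
    (σ₂ : Fin (2 * l) ⊕ Fin (l * m) → Rq q n)
    (hσ₂ : σ₂ = p + Matrix.fromRows T (1 : Matrix (Fin (l * m)) (Fin (l * m)) (Rq q n)) *ᵥ d) :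
    A *ᵥ σ₂ = σ₁ :=
  mlsign_verifies_general q n l m B' T G A hA σ₁ p d hd σ₂ hσ₂
end

section
/- Let q ≥ 2 be an integer, n, m positive integers, A an n × m matrix over ZMod q, and s > 0 a real number. Suppose σ, σ' ∈ ℤ^m satisfy σ ≠ σ', ‖σ‖ ≤ s·√m, ‖σ'‖ ≤ s·√m (Euclidean norms of the corresponding real vectors), and A·(σ mod q) = A·(σ' mod q). Then x := σ − σ' satisfies: x ≠ 0, A·(x mod q) = 0, and ‖x‖ ≤ 2·s·√m. (A collision in the trapdoor function f_A on the domain D_n = { e ∈ ℤ^m : ‖e‖ ≤ s√m } yields a solution to the SIS problem with bound β = 2s√m; this is the core of Theorem 2 and of the unforgeability reduction.) -/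
open Matrix

/-- The Euclidean norm of an integer vector, viewed as a vector in `ℝ^m`. -/
noncomputable def intEuclideanNorm {m : ℕ} (x : Fin m → ℤ) : ℝ :=
  Real.sqrt (∑ i, ((x i : ℝ)) ^ 2)

lemma intEuclideanNorm_eq_norm {m : ℕ} (x : Fin m → ℤ) :
    intEuclideanNorm x = ‖WithLp.toLp 2 (fun i => (x i : ℝ))‖ := by
  simp only [intEuclideanNorm, EuclideanSpace.norm_eq, Real.norm_eq_abs, sq_abs]

lemma intEuclideanNorm_sub_le {m : ℕ} (x y : Fin m → ℤ) :
    intEuclideanNorm (x - y) ≤ intEuclideanNorm x + intEuclideanNorm y := by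
  simp only [intEuclideanNorm_eq_norm, Pi.sub_apply, Int.cast_sub]
  exact norm_sub_le (WithLp.toLp 2 fun i => (x i : ℝ)) (WithLp.toLp 2 fun i => (y i : ℝ))

lemma mulVec_intCast_sub {R l n : Type*} [Ring R] [Fintype n] (A : Matrix l n R)
    (x y : n → ℤ) :
    (A *ᵥ fun i => (((x - y) i : ℤ) : R)) =
      (A *ᵥ fun i => (x i : R)) - A *ᵥ fun i => (y i : R) := by
  rw [← mulVec_sub]
  congr 1
  ext i
  simp only [Pi.sub_apply, Int.cast_sub]

theorem collision_gives_SIS_general (q : ℕ) (n m : ℕ)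
    (A : Matrix (Fin n) (Fin m) (ZMod q)) (s : ℝ)
    (σ σ' : Fin m → ℤ) (hne : σ ≠ σ')
    (hσ : intEuclideanNorm σ ≤ s * Real.sqrt m)
    (hσ' : intEuclideanNorm σ' ≤ s * Real.sqrt m)
    (hcol : (A *ᵥ fun i => ((σ i : ℤ) : ZMod q)) = A *ᵥ fun i => ((σ' i : ℤ) : ZMod q)) :
    σ - σ' ≠ 0 ∧ (A *ᵥ fun i => (((σ - σ') i : ℤ) : ZMod q)) = 0 ∧
      intEuclideanNorm (σ - σ') ≤ 2 * s * Real.sqrt m := by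
  refine ⟨sub_ne_zero.mpr hne, by rw [mulVec_intCast_sub, hcol, sub_self], ?_⟩
  calc intEuclideanNorm (σ - σ') ≤ intEuclideanNorm σ + intEuclideanNorm σ' :=
        intEuclideanNorm_sub_le σ σ'
    _ ≤ 2 * s * Real.sqrt m := by linarith

/-- A collision in the trapdoor function `f_A` on the domain
`D_n = { e ∈ ℤ^m : ‖e‖ ≤ s√m }` yields a SIS solution with bound `2s√m`. -/
theorem collision_gives_SIS (q : ℕ) (hq : 2 ≤ q) (n m : ℕ) (hn : 0 < n) (hm : 0 < m)
    (A : Matrix (Fin n) (Fin m) (ZMod q)) (s : ℝ) (hs : 0 < s)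
    (σ σ' : Fin m → ℤ) (hne : σ ≠ σ')
    (hσ : intEuclideanNorm σ ≤ s * Real.sqrt m)
    (hσ' : intEuclideanNorm σ' ≤ s * Real.sqrt m)
    (hcol : (A *ᵥ fun i => ((σ i : ℤ) : ZMod q)) = A *ᵥ fun i => ((σ' i : ℤ) : ZMod q)) :
    σ - σ' ≠ 0 ∧ (A *ᵥ fun i => (((σ - σ') i : ℤ) : ZMod q)) = 0 ∧
      intEuclideanNorm (σ - σ') ≤ 2 * s * Real.sqrt m :=
  collision_gives_SIS_general q n m A s σ σ' hne hσ hσ' hcol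
end
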